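/- (Wigner phase of the massless canonical representation.) Let A = [[a,b],[c,d]] ∈ SL(2,ℂ), let p ∈ Lk, and suppose the 4-vector q determined by the Hermitian matrix Q := A⁻¹ P (A⁻¹)* (i.e. Q = [[q₀+q₃, q₁−iq₂],[q₁+iq₂, q₀−q₃]]) also lies in Lk. Then the matrix H_p⁻¹ · A · H_q belongs to E(2), the complex number w := −b(p₁+ip₂) + d(p₀+p₃) is nonzero, and the (2,2) entry of H_p⁻¹ · A · H_q equals w/|w|, i.e. e^{−iθ(A,p)/2} := (H_p⁻¹ A H_q)₂₂ = (−b(p₁+ip₂)+d(p₀+p₃)) / |−b(p₁+ip₂)+d(p₀+p₃)|. -/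

import Mathlib

open Matrix

/-- The mantle of the forward light cone with the ray `p₃ = −p₀` removed. -/
def Lk : Set (Fin 4 → ℝ) :=
  {p | 0 < p 0 ∧ (p 0) ^ 2 = (p 1) ^ 2 + (p 2) ^ 2 + (p 3) ^ 2 ∧ 0 < p 0 + p 3}

/-- The Hermitian matrix `P` associated to a 4-vector `p`. -/
noncomputable def Pmat (p : Fin 4 → ℝ) : Matrix (Fin 2) (Fin 2) ℂ :=
  !![((p 0 + p 3 : ℝ) : ℂ), (p 1 : ℂ) - (p 2 : ℂ) * Complex.I;
     (p 1 : ℂ) + (p 2 : ℂ) * Complex.I, ((p 0 - p 3 : ℝ) : ℂ)]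

/-- The matrix `H_p` for `p ∈ Lk`. -/
noncomputable def Hmat (p : Fin 4 → ℝ) : Matrix (Fin 2) (Fin 2) ℂ :=
  (((Real.sqrt (2 * p 0 * (p 0 + p 3)))⁻¹ : ℝ) : ℂ) •
    !![-((Real.sqrt (p 0) : ℂ)) * ((p 0 + p 3 : ℝ) : ℂ),
        ((p 1 : ℂ) - (p 2 : ℂ) * Complex.I) / ((Real.sqrt (p 0) : ℝ) : ℂ);
       -((Real.sqrt (p 0) : ℂ)) * ((p 1 : ℂ) + (p 2 : ℂ) * Complex.I),
        -(((p 0 + p 3 : ℝ) : ℂ) / ((Real.sqrt (p 0) : ℝ) : ℂ))]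

/-- `E(2)`: matrices `A ∈ SL(2,ℂ)` with `A₂₁ = 0` and `|A₁₁| = 1`. -/
def E2 : Set (Matrix (Fin 2) (Fin 2) ℂ) :=
  {A | A.det = 1 ∧ A 1 0 = 0 ∧ ‖A 0 0‖ = 1}

/-!
For `p ∈ Lk` the matrix `P` is the rank-one matrix `v_p v_p*` with
`v_p = (√(p₀+p₃), (p₁+ip₂)/√(p₀+p₃))`, and the first column of `H_p` is `-v_p/√2`.
The hypothesis `Q = A⁻¹P(A⁻¹)*` then says `v_q v_q* = (A⁻¹v_p)(A⁻¹v_p)*`, so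
`A⁻¹v_p = c v_q` for a unimodular `c`. Hence `H_p⁻¹AH_q` maps the first basis vector to
`c⁻¹` times itself, which together with `det = 1` puts it in `E(2)` with `(2,2)` entry `c`;
reading off the first coordinate of `A⁻¹v_p = c v_q` gives `w = c √(p₀+p₃) √(q₀+q₃)`.
-/

theorem Complex.ofReal_sqrt_ne_zero {x : ℝ} (hx : 0 < x) : ((√x : ℝ) : ℂ) ≠ 0 :=
  Complex.ofReal_ne_zero.mpr (Real.sqrt_ne_zero'.mpr hx)

theorem Complex.ofReal_sqrt_sq {x : ℝ} (hx : 0 ≤ x) : ((√x : ℝ) : ℂ) ^ 2 = x := by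
  rw [← Complex.ofReal_pow, Real.sq_sqrt hx]

theorem Complex.ne_zero_and_div_norm_eq_of_eq_mul_ofReal {w c : ℂ} {r : ℝ} (hc : ‖c‖ = 1)
    (hr : 0 < r) (hw : w = c * r) : w ≠ 0 ∧ w / ‖w‖ = c := by
  have hnorm : ‖w‖ = r := by
    rw [hw, norm_mul, hc, one_mul, Complex.norm_real, Real.norm_of_nonneg hr.le]
  refine ⟨fun h => by simp [h] at hnorm; linarith, ?_⟩
  rw [hnorm, hw, mul_div_cancel_right₀ _ (Complex.ofReal_ne_zero.mpr hr.ne')]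

theorem Matrix.mul_vecMulVec_star_mul_conjTranspose {m n 𝕜 : Type*} [Fintype n]
    [NonUnitalSemiring 𝕜] [StarRing 𝕜] (A : Matrix m n 𝕜) (u : n → 𝕜) :
    A * vecMulVec u (star u) * Aᴴ = vecMulVec (A *ᵥ u) (star (A *ᵥ u)) := by
  rw [mul_vecMulVec, vecMulVec_mul, star_mulVec]

theorem exists_norm_eq_one_smul_of_vecMulVec_star_eq {ι 𝕜 : Type*} [RCLike 𝕜] {u v : ι → 𝕜}
    (h : vecMulVec u (star u) = vecMulVec v (star v)) {i : ι} (hv : v i ≠ 0) :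
    ∃ c : 𝕜, ‖c‖ = 1 ∧ u = c • v := by
  have hii := congrFun (congrFun h i) i
  simp only [vecMulVec_apply, Pi.star_apply, RCLike.star_def] at hii
  have hnorm : ‖u i‖ = ‖v i‖ := by
    rw [RCLike.mul_conj, RCLike.mul_conj] at hii
    exact (pow_left_inj₀ (norm_nonneg _) (norm_nonneg _) two_ne_zero).mp (by exact_mod_cast hii)
  refine ⟨u i / v i, by rw [norm_div, hnorm, div_self (norm_ne_zero_iff.mpr hv)],
    funext fun j => ?_⟩
  have hji := congrFun (congrFun h j) i
  simp only [vecMulVec_apply, Pi.star_apply, RCLike.star_def] at hji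
  rw [Pi.smul_apply, smul_eq_mul, div_mul_eq_mul_div, eq_div_iff hv]
  refine mul_right_cancel₀ ((map_ne_zero (starRingEnd 𝕜)).mpr hv) ?_
  linear_combination u i * hji - u j * hii

noncomputable def lightVec (p : Fin 4 → ℝ) : Fin 2 → ℂ :=
  ![(√(p 0 + p 3) : ℝ), ((p 1 : ℂ) + (p 2 : ℂ) * Complex.I) / (√(p 0 + p 3) : ℝ)]

section LightCone

variable {p : Fin 4 → ℝ}

theorem lightCone_eq_of_mem_Lk (hp : p ∈ Lk) :
    ((p 0 : ℂ) + p 3) * (p 0 - p 3) = ((p 1 : ℂ) + p 2 * Complex.I) * (p 1 - p 2 * Complex.I) := by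
  have h : (p 0 : ℂ) ^ 2 = (p 1 : ℂ) ^ 2 + (p 2 : ℂ) ^ 2 + (p 3 : ℂ) ^ 2 := by
    exact_mod_cast hp.2.1
  linear_combination h + (p 2 : ℂ) ^ 2 * Complex.I_sq

theorem lightVec_zero_ne_zero (hp : p ∈ Lk) : lightVec p 0 ≠ 0 :=
  Complex.ofReal_sqrt_ne_zero hp.2.2

theorem Pmat_eq_vecMulVec_lightVec (hp : p ∈ Lk) :
    Pmat p = vecMulVec (lightVec p) (star (lightVec p)) := by
  have ht := Complex.ofReal_sqrt_ne_zero hp.2.2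
  have ht2 := Complex.ofReal_sqrt_sq hp.2.2.le
  push_cast at ht2
  ext i j
  fin_cases i <;> fin_cases j <;>
    simp only [Pmat, lightVec, Fin.isValue, Fin.zero_eta, Fin.mk_one, Complex.ofReal_add,
      Complex.ofReal_sub, of_apply, cons_val', cons_val_zero, cons_val_one, cons_val_fin_one,
      vecMulVec_apply, Pi.star_apply, star_div₀, star_add, star_mul', RCLike.star_def,
      Complex.conj_ofReal, Complex.conj_I, mul_neg]
  · linear_combination -ht2
  · field_simp; ring
  · field_simp
  · field_simp
    linear_combination (p 0 - p 3 : ℂ) * ht2 + lightCone_eq_of_mem_Lk hp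

theorem sqrt_two_mul_mul_of_mem_Lk (hp : p ∈ Lk) :
    √(2 * p 0 * (p 0 + p 3)) = √2 * √(p 0) * √(p 0 + p 3) := by
  rw [Real.sqrt_mul (by linarith [hp.1]), Real.sqrt_mul zero_le_two]

theorem Hmat_mulVec_single_zero (hp : p ∈ Lk) :
    Hmat p *ᵥ Pi.single 0 1 = -((√2 : ℝ) : ℂ)⁻¹ • lightVec p := by
  have hs := Complex.ofReal_sqrt_ne_zero hp.1
  have ht := Complex.ofReal_sqrt_ne_zero hp.2.2
  have h2 := Complex.ofReal_sqrt_ne_zero two_pos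
  have ht2 := Complex.ofReal_sqrt_sq hp.2.2.le
  push_cast at ht2
  ext i
  fin_cases i <;>
    simp only [Hmat, lightVec, sqrt_two_mul_mul_of_mem_Lk hp, Fin.isValue, Fin.zero_eta,
      Fin.mk_one, _root_.mul_inv_rev, Complex.ofReal_mul, Complex.ofReal_inv, Complex.ofReal_add,
      neg_mul, mul_neg, smul_of, smul_cons, smul_eq_mul, smul_empty, smul_neg, one_smul,
      mulVec_single, MulOpposite.op_one, Pi.smul_apply, col_apply, of_apply, cons_val',
      cons_val_zero, cons_val_one, cons_val_fin_one, neg_inj]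
  · field_simp
    linear_combination -ht2
  · field_simp

theorem det_Hmat (hp : p ∈ Lk) : (Hmat p).det = 1 := by
  have hs := Complex.ofReal_sqrt_ne_zero hp.1
  have ht := Complex.ofReal_sqrt_ne_zero hp.2.2
  have h2 := Complex.ofReal_sqrt_ne_zero two_pos
  simp only [Hmat, det_fin_two, sqrt_two_mul_mul_of_mem_Lk hp, Fin.isValue, _root_.mul_inv_rev,
    Complex.ofReal_mul, Complex.ofReal_inv, Complex.ofReal_add, neg_mul, mul_neg, smul_of,
    smul_cons, smul_eq_mul, smul_empty, of_apply, cons_val', cons_val_zero, cons_val_one,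
    cons_val_fin_one, neg_neg, sub_neg_eq_add]
  field_simp
  rw [Complex.ofReal_sqrt_sq hp.1.le, Complex.ofReal_sqrt_sq hp.2.2.le,
    Complex.ofReal_sqrt_sq zero_le_two]
  push_cast
  linear_combination -(lightCone_eq_of_mem_Lk hp)

end LightCone

theorem inv_mulVec_lightVec_zero {A : Matrix (Fin 2) (Fin 2) ℂ} (hA : A.det = 1)
    {p : Fin 4 → ℝ} (hp : p ∈ Lk) :
    (A⁻¹ *ᵥ lightVec p) 0 = (-(A 0 1) * ((p 1 : ℂ) + (p 2 : ℂ) * Complex.I)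
      + A 1 1 * ((p 0 + p 3 : ℝ) : ℂ)) / ((√(p 0 + p 3) : ℝ) : ℂ) := by
  have ht := Complex.ofReal_sqrt_ne_zero hp.2.2
  have ht2 := Complex.ofReal_sqrt_sq hp.2.2.le
  push_cast at ht2
  simp only [inv_def, hA, Ring.inverse_one, one_smul, adjugate_fin_two, lightVec, mulVec,
    dotProduct, Fin.sum_univ_two, Fin.isValue, of_apply, cons_val', cons_val_zero, cons_val_one,
    cons_val_fin_one, neg_mul, Complex.ofReal_add]
  field_simp
  linear_combination A 1 1 * ht2

theorem Hmat_inv_mul_mul_Hmat_mulVec_single_zero {A : Matrix (Fin 2) (Fin 2) ℂ}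
    {p q : Fin 4 → ℝ} (hp : p ∈ Lk) (hq : q ∈ Lk) {a : ℂ}
    (hA : A *ᵥ lightVec q = a • lightVec p) :
    ((Hmat p)⁻¹ * A * Hmat q) *ᵥ Pi.single 0 1 = a • Pi.single 0 1 := by
  rw [← mulVec_mulVec, Hmat_mulVec_single_zero hq, mulVec_smul, ← mulVec_mulVec, hA,
    mulVec_smul, smul_comm, ← mulVec_smul, ← Hmat_mulVec_single_zero hp, mulVec_mulVec,
    nonsing_inv_mul _ (by simp [det_Hmat hp]), one_mulVec]

theorem mem_E2_of_mulVec_single_zero {M : Matrix (Fin 2) (Fin 2) ℂ} (hdet : M.det = 1) {a : ℂ}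
    (ha : ‖a‖ = 1) (hM : M *ᵥ Pi.single 0 1 = a • Pi.single 0 1) :
    M ∈ E2 ∧ M 1 1 = a⁻¹ := by
  have hM00 : M 0 0 = a := by simpa using congrFun hM 0
  have hM10 : M 1 0 = 0 := by simpa using congrFun hM 1
  refine ⟨⟨hdet, hM10, hM00 ▸ ha⟩, ?_⟩
  rw [det_fin_two, hM00, hM10, mul_zero, sub_zero] at hdet
  exact eq_inv_of_mul_eq_one_right hdet

/-- Wigner phase of the massless canonical representation: for `A ∈ SL(2,ℂ)` and
`p, q ∈ Lk` with `Q = A⁻¹P(A⁻¹)*`, the matrix `H_p⁻¹AH_q` lies in `E(2)`, the number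
`w = −b(p₁+ip₂) + d(p₀+p₃)` is nonzero, and `(H_p⁻¹AH_q)₂₂ = w/|w|`. -/
theorem wigner_phase (A : Matrix (Fin 2) (Fin 2) ℂ) (hA : A.det = 1)
    (p q : Fin 4 → ℝ) (hp : p ∈ Lk) (hq : q ∈ Lk)
    (hQ : A⁻¹ * Pmat p * (A⁻¹)ᴴ = Pmat q) :
    (Hmat p)⁻¹ * A * Hmat q ∈ E2 ∧
    -(A 0 1) * ((p 1 : ℂ) + (p 2 : ℂ) * Complex.I)
        + A 1 1 * ((p 0 + p 3 : ℝ) : ℂ) ≠ 0 ∧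
    ((Hmat p)⁻¹ * A * Hmat q) 1 1
      = (-(A 0 1) * ((p 1 : ℂ) + (p 2 : ℂ) * Complex.I)
            + A 1 1 * ((p 0 + p 3 : ℝ) : ℂ))
        / ((‖-(A 0 1) * ((p 1 : ℂ) + (p 2 : ℂ) * Complex.I)
            + A 1 1 * ((p 0 + p 3 : ℝ) : ℂ)‖ : ℝ) : ℂ) := by
  obtain ⟨c, hc, hcv⟩ : ∃ c : ℂ, ‖c‖ = 1 ∧ A⁻¹ *ᵥ lightVec p = c • lightVec q := by
    refine exists_norm_eq_one_smul_of_vecMulVec_star_eq ?_ (lightVec_zero_ne_zero hq)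
    rw [← mul_vecMulVec_star_mul_conjTranspose, ← Pmat_eq_vecMulVec_lightVec hp,
      ← Pmat_eq_vecMulVec_lightVec hq, hQ]
  have hAq : A *ᵥ lightVec q = c⁻¹ • lightVec p := by
    rw [← inv_smul_smul₀ (norm_ne_zero_iff.mp (hc ▸ one_ne_zero)) (lightVec q), ← hcv,
      mulVec_smul, mulVec_mulVec, mul_nonsing_inv _ (by simp [hA]), one_mulVec]
  obtain ⟨hE2, hM11⟩ := mem_E2_of_mulVec_single_zero
    (by simp [det_mul, det_nonsing_inv, det_Hmat hp, det_Hmat hq, hA])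
    (by rw [norm_inv, hc, inv_one]) (Hmat_inv_mul_mul_Hmat_mulVec_single_zero hp hq hAq)
  have hw : -(A 0 1) * ((p 1 : ℂ) + (p 2 : ℂ) * Complex.I) + A 1 1 * ((p 0 + p 3 : ℝ) : ℂ)
      = c * ((√(p 0 + p 3) * √(q 0 + q 3) : ℝ) : ℂ) := by
    have h0 := congrFun hcv 0
    rw [inv_mulVec_lightVec_zero hA hp, div_eq_iff (Complex.ofReal_sqrt_ne_zero hp.2.2)] at h0
    rw [h0, Complex.ofReal_mul]
    simp [lightVec, mul_comm, mul_left_comm]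
  obtain ⟨hw0, hwc⟩ := Complex.ne_zero_and_div_norm_eq_of_eq_mul_ofReal hc
    (mul_pos (Real.sqrt_pos.mpr hp.2.2) (Real.sqrt_pos.mpr hq.2.2)) hw
  exact ⟨hE2, hw0, by rw [hM11, inv_inv, hwc]⟩
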